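/- The generating function M(x,y) = ∑_{λ,k ≥ 0} m_{λ,k} x^λ y^k, where m_{λ,k} = 2^{−λ} ∑_{2^λ ≤ n < 2^{λ+1}} ϑ̃(k,n), satisfies (as an identity of formal power series) M(x,y) = (y/2)·(4 − 3xy − 2xy²)/((1 − xy)(1 − (x/2)(1+y)²)). -/

import Mathlib

/-- `s₂`, the binary sum-of-digits function. -/
def s2 (n : ℕ) : ℕ := (Nat.digits 2 n).sum

/-- `ϑ₂(j,n)`: the number of `t ∈ {0,…,n}` with `ν₂(C(n,t)) = j`. -/
def theta2 (j n : ℕ) : ℕ :=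
  ((Finset.range (n + 1)).filter (fun t => padicValNat 2 (n.choose t) = j)).card

/-- `ϑ̃(k,n) = ϑ₂(k − s₂(n), n)` if `k ≥ s₂(n)` (and `n ≥ 0`), else `0`. -/
def tth (k n : ℤ) : ℕ :=
  if 0 ≤ n ∧ (s2 n.toNat : ℤ) ≤ k then theta2 (k - s2 n.toNat).toNat n.toNat
  else 0

/-- `m_{λ,k} = 2^{-λ} ∑_{2^λ ≤ n < 2^{λ+1}} ϑ̃(k,n)`. -/
noncomputable def mCoeff (lam : ℕ) (k : ℤ) : ℚ :=
  (∑ n ∈ Finset.Ico (2 ^ lam) (2 ^ (lam + 1)), (tth k n : ℚ)) / 2 ^ lam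

/-- The generating function `M(x,y) = ∑ m_{λ,k} x^λ y^k` as a formal power
series (coefficient of `x^λ y^k` is `m_{λ,k}`). -/
noncomputable def Mgf : MvPowerSeries (Fin 2) ℚ := fun d => mCoeff (d 0) (d 1)

lemma s2_zero : s2 0 = 0 := by simp [s2]
lemma s2_one : s2 1 = 1 := by simp [s2]

lemma s2_two_mul (u : ℕ) : s2 (2 * u) = s2 u := by
  rcases Nat.eq_zero_or_pos u with h | h
  · simp [h, s2]
  · unfold s2
    rw [Nat.digits_def' (by norm_num) (by omega)]
    simp [Nat.mul_div_cancel_left, Nat.mul_mod_right]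

lemma s2_two_mul_add_one (u : ℕ) : s2 (2 * u + 1) = s2 u + 1 := by
  unfold s2
  rw [Nat.digits_def' (by norm_num) (by omega)]
  simp [Nat.add_mul_div_left, Nat.add_mul_mod_self_left, add_comm]

lemma s2_subadd : ∀ m a b : ℕ, a + b = m →
    s2 (a + b) ≤ s2 a + s2 b ∧ s2 (a + b + 1) ≤ s2 a + s2 b + 1 := by
  intro m
  induction m using Nat.strong_induction_on with
  | _ m ih =>
    intro a b hab
    rcases Nat.eq_zero_or_pos m with hm | hm
    · have ha : a = 0 := by omega
      have hb : b = 0 := by omega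
      subst ha hb; simp [s2_zero, s2_one]
    · obtain ⟨a', ra, hra, ha⟩ : ∃ a' r, r < 2 ∧ a = 2 * a' + r := ⟨a / 2, a % 2, Nat.mod_lt _ (by norm_num), by omega⟩
      obtain ⟨b', rb, hrb, hb⟩ : ∃ b' r, r < 2 ∧ b = 2 * b' + r := ⟨b / 2, b % 2, Nat.mod_lt _ (by norm_num), by omega⟩
      have hlt : a' + b' < m := by omega
      have IH := ih (a' + b') hlt a' b' rfl
      subst ha hb
      interval_cases ra <;> interval_cases rb <;> try simp only [add_zero]
      · rw [show 2 * a' + 2 * b' = 2 * (a' + b') from by ring, s2_two_mul,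
          s2_two_mul_add_one, s2_two_mul, s2_two_mul]
        omega
      · rw [show 2 * a' + (2 * b' + 1) = 2 * (a' + b') + 1 from by ring, s2_two_mul_add_one,
          show 2 * (a' + b') + 1 + 1 = 2 * (a' + b' + 1) from by ring, s2_two_mul,
          s2_two_mul, s2_two_mul_add_one]
        omega
      · rw [show 2 * a' + 1 + 2 * b' = 2 * (a' + b') + 1 from by ring, s2_two_mul_add_one,
          show 2 * (a' + b') + 1 + 1 = 2 * (a' + b' + 1) from by ring, s2_two_mul,
          s2_two_mul_add_one, s2_two_mul]
        omega
      · rw [show 2 * a' + 1 + (2 * b' + 1) = 2 * (a' + b' + 1) from by ring, s2_two_mul,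
          s2_two_mul_add_one, s2_two_mul_add_one, s2_two_mul_add_one]
        omega

lemma s2_le_add (a b : ℕ) : s2 (a + b) ≤ s2 a + s2 b := (s2_subadd (a+b) a b rfl).1

lemma padic_s2 {t n : ℕ} (h : t ≤ n) :
    (padicValNat 2 (n.choose t) : ℤ) = s2 t + s2 (n - t) - s2 n := by
  have key := @sub_one_mul_padicValNat_choose_eq_sub_sum_digits 2 t n ⟨Nat.prime_two⟩ h
  have hle : s2 n ≤ s2 t + s2 (n - t) := by
    have := s2_le_add t (n - t)
    rwa [Nat.add_sub_cancel' h] at this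
  unfold s2 at *
  omega

lemma tth_coe (k : ℤ) (n : ℕ) :
    tth k n = ((Finset.range (n + 1)).filter
      (fun t => (s2 t : ℤ) + s2 (n - t) = k)).card := by
  unfold tth
  rw [Int.toNat_natCast]
  by_cases h : (s2 n : ℤ) ≤ k
  · rw [if_pos ⟨Int.natCast_nonneg n, h⟩]
    unfold theta2
    congr 1
    apply Finset.filter_congr
    intro t ht
    have htn : t ≤ n := by
      simp only [Finset.mem_range] at ht; omega
    have hv := padic_s2 htn
    constructor
    · intro he
      have : (padicValNat 2 (n.choose t) : ℤ) = k - s2 n := by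
        rw [he]; omega
      simp only [eq_comm]
      omega
    · intro he
      have : (padicValNat 2 (n.choose t) : ℤ) = k - s2 n := by omega
      omega
  · rw [if_neg (by tauto)]
    symm
    rw [Finset.card_eq_zero, Finset.filter_eq_empty_iff]
    intro t ht
    have htn : t ≤ n := by simp only [Finset.mem_range] at ht; omega
    have hle : s2 n ≤ s2 t + s2 (n - t) := by
      have := s2_le_add t (n - t)
      rwa [Nat.add_sub_cancel' htn] at this
    intro he
    omega

lemma sum_range_two_mul {M : Type*} [AddCommMonoid M] (f : ℕ → M) (m : ℕ) :
    ∑ t ∈ Finset.range (2 * m), f t = ∑ u ∈ Finset.range m, (f (2 * u) + f (2 * u + 1)) := by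
  induction m with
  | zero => simp
  | succ m ih =>
    rw [show 2 * (m + 1) = (2 * m + 1) + 1 from by ring, Finset.sum_range_succ,
      Finset.sum_range_succ, Finset.sum_range_succ, ih]
    rw [add_assoc]

lemma tth_zero (k : ℤ) : tth k 0 = if k = 0 then 1 else 0 := by
  have h := tth_coe k 0
  simp only [Nat.cast_zero] at h
  rw [h, Finset.range_one]
  rcases eq_or_ne k 0 with hk | hk <;>
    simp [Finset.filter_singleton, s2_zero, eq_comm, hk]

lemma tth_odd (k : ℤ) (n : ℕ) : tth k (2 * n + 1) = 2 * tth (k - 1) n := by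
  have h := tth_coe k (2 * n + 1)
  push_cast at h
  rw [h, tth_coe, Finset.card_filter, Finset.card_filter,
    show 2 * n + 1 + 1 = 2 * (n + 1) from by ring, sum_range_two_mul, Finset.mul_sum]
  apply Finset.sum_congr rfl
  intro u hu
  have hun : u ≤ n := by simp only [Finset.mem_range] at hu; omega
  have h1 : 2 * n + 1 - 2 * u = 2 * (n - u) + 1 := by omega
  have h2 : 2 * n + 1 - (2 * u + 1) = 2 * (n - u) := by omega
  rw [h1, h2, s2_two_mul, s2_two_mul_add_one, s2_two_mul, s2_two_mul_add_one]
  push_cast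
  by_cases hc : (s2 u : ℤ) + s2 (n - u) = k - 1
  · rw [if_pos (by omega), if_pos (by omega), if_pos (by omega)]; ring
  · rw [if_neg (by omega), if_neg (by omega), if_neg (by omega)]; ring

lemma tth_even (k : ℤ) (n : ℕ) :
    tth k (2 * n + 2) = tth k (n + 1) + tth (k - 2) n := by
  have h := tth_coe k (2 * n + 2)
  push_cast at h
  have h2 := tth_coe k (n + 1)
  push_cast at h2
  rw [h, h2, tth_coe, Finset.card_filter, Finset.card_filter, Finset.card_filter,
    show 2 * n + 2 + 1 = 2 * (n + 1) + 1 from rfl, Finset.sum_range_succ,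
    sum_range_two_mul, Finset.sum_add_distrib]
  have hA : ∀ u ∈ Finset.range (n + 1),
      (if (s2 (2 * u) : ℤ) + s2 (2 * n + 2 - 2 * u) = k then (1:ℕ) else 0)
        = (if (s2 u : ℤ) + s2 (n + 1 - u) = k then 1 else 0) := by
    intro u hu
    have hun : u ≤ n := by simp only [Finset.mem_range] at hu; omega
    have e1 : 2 * n + 2 - 2 * u = 2 * (n + 1 - u) := by omega
    rw [e1, s2_two_mul, s2_two_mul]
  have hB : ∀ u ∈ Finset.range (n + 1),
      (if (s2 (2 * u + 1) : ℤ) + s2 (2 * n + 2 - (2 * u + 1)) = k then (1:ℕ) else 0)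
        = (if (s2 u : ℤ) + s2 (n - u) = k - 2 then 1 else 0) := by
    intro u hu
    have hun : u ≤ n := by simp only [Finset.mem_range] at hu; omega
    have e1 : 2 * n + 2 - (2 * u + 1) = 2 * (n - u) + 1 := by omega
    rw [e1, s2_two_mul_add_one, s2_two_mul_add_one]
    push_cast
    by_cases hc : (s2 u : ℤ) + s2 (n - u) = k - 2
    · rw [if_pos (by omega), if_pos (by omega)]
    · rw [if_neg (by omega), if_neg (by omega)]
  have hC : (if (s2 (2 * (n + 1)) : ℤ) + s2 (2 * n + 2 - 2 * (n + 1)) = k then (1:ℕ) else 0)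
      = (if (s2 (n + 1) : ℤ) + s2 (n + 1 - (n + 1)) = k then 1 else 0) := by
    have e1 : 2 * n + 2 - 2 * (n + 1) = 0 := by omega
    have e2 : n + 1 - (n + 1) = 0 := by omega
    rw [e1, e2, s2_two_mul]
  rw [Finset.sum_congr rfl hA, Finset.sum_congr rfl hB, hC]
  conv_rhs => rw [Finset.sum_range_succ]
  ring

lemma tth_pow (k : ℤ) (mu : ℕ) :
    tth k ((2 ^ mu - 1 : ℕ) : ℤ) = if k = mu then 2 ^ mu else 0 := by
  induction mu generalizing k with
  | zero => simpa using tth_zero k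
  | succ mu ih =>
    have he : (2 ^ (mu + 1) - 1 : ℕ) = 2 * (2 ^ mu - 1) + 1 := by
      have : 1 ≤ 2 ^ mu := Nat.one_le_two_pow
      omega
    rw [he]
    have := tth_odd k (2 ^ mu - 1)
    rw [show ((2 * (2 ^ mu - 1) + 1 : ℕ) : ℤ) = 2 * ((2 ^ mu - 1 : ℕ) : ℤ) + 1 from by
      push_cast; ring]
    rw [this, ih (k - 1)]
    by_cases hk : k = mu + 1
    · rw [if_pos (by omega : k - 1 = (mu : ℤ)), if_pos (by exact_mod_cast hk)]
      ring
    · rw [if_neg (by push_cast; omega), if_neg (by push_cast at hk ⊢; omega)]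
      try ring

lemma sum_Ico_two_mul {M : Type*} [AddCommMonoid M] (f : ℕ → M) (a n : ℕ) :
    ∑ t ∈ Finset.Ico (2 * a) (2 * (a + n)), f t
      = ∑ u ∈ Finset.Ico a (a + n), (f (2 * u) + f (2 * u + 1)) := by
  induction n with
  | zero => simp
  | succ n ih =>
    rw [show 2 * (a + (n + 1)) = (2 * (a + n) + 1) + 1 from by ring,
      Finset.sum_Ico_succ_top (by omega), Finset.sum_Ico_succ_top (by omega),
      show a + (n + 1) = (a + n) + 1 from by ring,
      Finset.sum_Ico_succ_top (by omega), ih, add_assoc]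

lemma sum_Ico_shift {M : Type*} [AddCommMonoid M] (f : ℕ → M) (A B : ℕ) (hA : 1 ≤ A) :
    ∑ u ∈ Finset.Ico A B, f (u - 1) = ∑ v ∈ Finset.Ico (A - 1) (B - 1), f v := by
  rw [Finset.sum_Ico_eq_sum_range, Finset.sum_Ico_eq_sum_range]
  rw [show B - 1 - (A - 1) = B - A from by omega]
  apply Finset.sum_congr rfl
  intro i _
  congr 1
  omega

lemma tth_neg {k n : ℤ} (hk : k < 0) : tth k n = 0 := by
  unfold tth
  rw [if_neg]
  rintro ⟨-, h⟩
  have : (0 : ℤ) ≤ s2 n.toNat := Int.natCast_nonneg _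
  omega

lemma mCoeff_neg {lam : ℕ} {k : ℤ} (hk : k < 0) : mCoeff lam k = 0 := by
  unfold mCoeff
  rw [Finset.sum_congr rfl (fun n _ => by rw [tth_neg hk, Nat.cast_zero])]
  simp

lemma sum_Ico_natCast {M : Type*} [AddCommMonoid M] (f : ℤ → M) (a b : ℕ) :
    ∑ n ∈ Finset.Ico (a : ℤ) (b : ℤ), f n = ∑ n ∈ Finset.Ico a b, f (n : ℤ) := by
  rw [Int.Ico_eq_finset_map, Finset.sum_map, Finset.sum_Ico_eq_sum_range,
    show ((b : ℤ) - (a : ℤ)).toNat = b - a from by omega]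
  apply Finset.sum_congr rfl
  intro i _
  simp only [Function.Embedding.trans_apply, Nat.castEmbedding_apply, addLeftEmbedding_apply]
  congr 1

lemma mCoeff_zero (k : ℤ) : mCoeff 0 k = if k = 1 then 2 else 0 := by
  unfold mCoeff
  rw [show ((2:ℤ) ^ 0) = ((2 ^ 0 : ℕ) : ℤ) from by norm_num,
    show ((2:ℤ) ^ (0 + 1)) = ((2 ^ (0 + 1) : ℕ) : ℤ) from by norm_num,
    sum_Ico_natCast (fun n => (tth k n : ℚ)),
    show Finset.Ico (2 ^ 0 : ℕ) (2 ^ (0 + 1) : ℕ) = {1} from rfl, Finset.sum_singleton]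
  rw [show ((1 : ℕ) : ℤ) = 2 * ((0 : ℕ) : ℤ) + 1 from by norm_num, tth_odd, Nat.cast_zero,
    tth_zero]
  by_cases hk : k = 1
  · rw [if_pos (by omega : k - 1 = 0), if_pos hk]; try norm_num
  · rw [if_neg (by omega : ¬(k - 1 = 0)), if_neg hk]; try norm_num

lemma mCoeff_rec (lam : ℕ) (k : ℤ) :
    2 * mCoeff (lam + 1) k
      = mCoeff lam k + 2 * mCoeff lam (k - 1) + mCoeff lam (k - 2)
        + (if k = lam + 2 then 1 else 0) - 2 * (if k = lam + 3 then 1 else 0) := by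
  have hA : 1 ≤ 2 ^ lam := Nat.one_le_two_pow
  have hsplit : ∑ n ∈ Finset.Ico (2 ^ (lam + 1) : ℕ) (2 ^ (lam + 2) : ℕ), (tth k (n : ℤ) : ℚ)
      = ∑ u ∈ Finset.Ico (2 ^ lam : ℕ) (2 * 2 ^ lam : ℕ),
          ((tth k ((2 * u : ℕ) : ℤ) : ℚ) + (tth k ((2 * u + 1 : ℕ) : ℤ) : ℚ)) := by
    rw [show (2:ℕ) ^ (lam + 1) = 2 * 2 ^ lam from by ring,
      show (2:ℕ) ^ (lam + 2) = 2 * (2 ^ lam + 2 ^ lam) from by ring,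
      sum_Ico_two_mul (fun t => (tth k ((t : ℕ) : ℤ) : ℚ)) (2 ^ lam) (2 ^ lam),
      show (2:ℕ) ^ lam + 2 ^ lam = 2 * 2 ^ lam from by ring]
  have hpt : ∀ u ∈ Finset.Ico (2 ^ lam : ℕ) (2 * 2 ^ lam : ℕ),
      ((tth k ((2 * u : ℕ) : ℤ) : ℚ) + (tth k ((2 * u + 1 : ℕ) : ℤ) : ℚ))
        = (tth k ((u : ℕ) : ℤ) : ℚ) + 2 * (tth (k - 1) ((u : ℕ) : ℤ) : ℚ)
          + (tth (k - 2) ((u - 1 : ℕ) : ℤ) : ℚ) := by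
    intro u hu
    have hu1 : 1 ≤ u := by simp only [Finset.mem_Ico] at hu; omega
    rw [show ((2 * u + 1 : ℕ) : ℤ) = 2 * ((u : ℕ) : ℤ) + 1 from by push_cast; ring, tth_odd,
      show ((2 * u : ℕ) : ℤ) = 2 * ((u - 1 : ℕ) : ℤ) + 2 from by push_cast [hu1]; ring,
      tth_even, show ((u - 1 : ℕ) : ℤ) + 1 = ((u : ℕ) : ℤ) from by push_cast [hu1]; ring]
    push_cast
    ring
  have hshift : ∑ u ∈ Finset.Ico (2 ^ lam : ℕ) (2 * 2 ^ lam : ℕ),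
        (tth (k - 2) ((u - 1 : ℕ) : ℤ) : ℚ)
      = ∑ u ∈ Finset.Ico (2 ^ lam : ℕ) (2 * 2 ^ lam : ℕ), (tth (k - 2) ((u : ℕ) : ℤ) : ℚ)
        + (if k = lam + 2 then (2 ^ lam : ℚ) else 0)
        - (if k = lam + 3 then (2 ^ (lam + 1) : ℚ) else 0) := by
    rw [sum_Ico_shift (fun v => (tth (k - 2) ((v : ℕ) : ℤ) : ℚ)) (2 ^ lam) (2 * 2 ^ lam) hA]
    have h1 : ∑ v ∈ Finset.Ico (2 ^ lam - 1 : ℕ) (2 * 2 ^ lam - 1 : ℕ),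
            (tth (k - 2) ((v : ℕ) : ℤ) : ℚ)
          + (tth (k - 2) ((2 * 2 ^ lam - 1 : ℕ) : ℤ) : ℚ)
        = (tth (k - 2) ((2 ^ lam - 1 : ℕ) : ℤ) : ℚ)
          + ∑ u ∈ Finset.Ico (2 ^ lam : ℕ) (2 * 2 ^ lam : ℕ),
              (tth (k - 2) ((u : ℕ) : ℤ) : ℚ) := by
      rw [← Finset.sum_Ico_succ_top (by omega : 2 ^ lam - 1 ≤ 2 * 2 ^ lam - 1),
        show 2 * 2 ^ lam - 1 + 1 = 2 * 2 ^ lam from by omega,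
        Finset.sum_eq_sum_Ico_succ_bot (by omega : 2 ^ lam - 1 < 2 * 2 ^ lam),
        show 2 ^ lam - 1 + 1 = 2 ^ lam from by omega]
    have hb1 : (tth (k - 2) ((2 ^ lam - 1 : ℕ) : ℤ) : ℚ)
        = if k = lam + 2 then (2 ^ lam : ℚ) else 0 := by
      rw [tth_pow (k - 2) lam]
      by_cases hk : k = lam + 2
      · rw [if_pos (by omega), if_pos hk]; norm_num
      · rw [if_neg (by omega), if_neg hk]; norm_num
    have hb2 : (tth (k - 2) ((2 * 2 ^ lam - 1 : ℕ) : ℤ) : ℚ)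
        = if k = lam + 3 then (2 ^ (lam + 1) : ℚ) else 0 := by
      rw [show 2 * 2 ^ lam - 1 = 2 ^ (lam + 1) - 1 from by rw [pow_succ]; ring_nf,
        tth_pow (k - 2) (lam + 1)]
      by_cases hk : k = lam + 3
      · rw [if_pos (by push_cast; omega), if_pos hk]; norm_num
      · rw [if_neg (by push_cast; omega), if_neg hk]; norm_num
    rw [← hb1, ← hb2]
    linarith [h1]
  have key : ∑ n ∈ Finset.Ico (2 ^ (lam + 1) : ℕ) (2 ^ (lam + 2) : ℕ), (tth k (n : ℤ) : ℚ)
      = ∑ u ∈ Finset.Ico (2 ^ lam : ℕ) (2 * 2 ^ lam : ℕ), (tth k ((u : ℕ) : ℤ) : ℚ)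
        + 2 * ∑ u ∈ Finset.Ico (2 ^ lam : ℕ) (2 * 2 ^ lam : ℕ), (tth (k - 1) ((u : ℕ) : ℤ) : ℚ)
        + ∑ u ∈ Finset.Ico (2 ^ lam : ℕ) (2 * 2 ^ lam : ℕ), (tth (k - 2) ((u : ℕ) : ℤ) : ℚ)
        + (if k = lam + 2 then (2 ^ lam : ℚ) else 0)
        - (if k = lam + 3 then (2 ^ (lam + 1) : ℚ) else 0) := by
    rw [hsplit, Finset.sum_congr rfl hpt]
    rw [Finset.sum_add_distrib, Finset.sum_add_distrib, hshift, Finset.mul_sum]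
    ring
  unfold mCoeff
  rw [show ((2:ℤ) ^ (lam + 1)) = ((2 ^ (lam + 1) : ℕ) : ℤ) from by push_cast; ring,
    show ((2:ℤ) ^ (lam + 1 + 1)) = ((2 ^ (lam + 2) : ℕ) : ℤ) from by push_cast; ring,
    show ((2:ℤ) ^ lam) = ((2 ^ lam : ℕ) : ℤ) from by push_cast; ring,
    sum_Ico_natCast (fun n => (tth k n : ℚ)),
    sum_Ico_natCast (fun n => (tth (k - 1) n : ℚ)),
    sum_Ico_natCast (fun n => (tth (k - 2) n : ℚ)),
    sum_Ico_natCast (fun n => (tth k n : ℚ)), key,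
    show (2:ℕ) ^ (lam + 1) = 2 * 2 ^ lam from by ring]
  have h2 : (2 : ℚ) ^ (lam + 1) = 2 * 2 ^ lam := by rw [pow_succ]; ring
  have hpos : (2 : ℚ) ^ lam ≠ 0 := by positivity
  field_simp [h2]
  split_ifs <;> ring

open MvPowerSeries

noncomputable def mono (a b : ℕ) (c : ℚ) : MvPowerSeries (Fin 2) ℚ :=
  monomial (Finsupp.single (0 : Fin 2) a + Finsupp.single 1 b) c

lemma mono_eq (a b : ℕ) (c : ℚ) :
    mono a b c = C c * X 0 ^ a * X 1 ^ b := by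
  unfold mono
  rw [X_pow_eq, X_pow_eq, show (C c : MvPowerSeries (Fin 2) ℚ) = monomial 0 c from rfl,
    monomial_mul_monomial, monomial_mul_monomial]
  rw [mul_one, mul_one, zero_add]

lemma coeff_Mgf (d : Fin 2 →₀ ℕ) : MvPowerSeries.coeff d Mgf = mCoeff (d 0) (d 1) := rfl

lemma le_e_iff (d : Fin 2 →₀ ℕ) (a b : ℕ) :
    Finsupp.single (0 : Fin 2) a + Finsupp.single 1 b ≤ d ↔ a ≤ d 0 ∧ b ≤ d 1 := by
  simp [Finsupp.le_def, Fin.forall_fin_two, Finsupp.single_apply]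

lemma eq_e_iff (d : Fin 2 →₀ ℕ) (a b : ℕ) :
    d = Finsupp.single (0 : Fin 2) a + Finsupp.single 1 b ↔ d 0 = a ∧ d 1 = b := by
  constructor
  · intro h; subst h
    simp [Finsupp.single_apply]
  · intro ⟨h0, h1⟩
    ext i
    fin_cases i <;> simp [Finsupp.single_apply, h0, h1]

lemma h2 : (2 : MvPowerSeries (Fin 2) ℚ) * (C (1 / 2 : ℚ) : MvPowerSeries (Fin 2) ℚ) = 1 := by
  rw [show (2 : MvPowerSeries (Fin 2) ℚ) = C (2 : ℚ) from (map_ofNat _ 2).symm,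
    ← map_mul, show (2 : ℚ) * (1 / 2) = 1 from by norm_num, map_one]

lemma hP : (1 - X 0 * X 1) * (1 - (C (1 / 2 : ℚ) : MvPowerSeries (Fin 2) ℚ) * X 0 * (1 + X 1) ^ 2)
    = mono 0 0 1 - mono 1 0 (1 / 2) - mono 1 1 2 - mono 1 2 (1 / 2)
      + mono 2 1 (1 / 2) + mono 2 2 1 + mono 2 3 (1 / 2) := by
  rw [mono_eq, mono_eq, mono_eq, mono_eq, mono_eq, mono_eq, mono_eq,
    show (C (2 : ℚ) : MvPowerSeries (Fin 2) ℚ) = 2 from map_ofNat _ 2, map_one]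
  linear_combination (X 0 ^ 2 * X 1 ^ 2 - X 0 * X 1) * h2

lemma hR : (C (1 / 2 : ℚ) : MvPowerSeries (Fin 2) ℚ) * X 1 * (4 - 3 * X 0 * X 1 - 2 * X 0 * X 1 ^ 2)
    = mono 0 1 2 - mono 1 2 (3 / 2) - mono 1 3 1 := by
  rw [mono_eq, mono_eq, mono_eq,
    show (C (2 : ℚ) : MvPowerSeries (Fin 2) ℚ) = 2 from map_ofNat _ 2, map_one,
    show (C (3 / 2 : ℚ) : MvPowerSeries (Fin 2) ℚ) = 3 * (C (1 / 2 : ℚ) : MvPowerSeries (Fin 2) ℚ) from by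
      rw [show (3 / 2 : ℚ) = 3 * (1 / 2) from by norm_num, map_mul, map_ofNat]]
  linear_combination (2 * X 1 - X 0 * X 1 ^ 3) * h2

lemma coeff_mono (d : Fin 2 →₀ ℕ) (a b : ℕ) (c : ℚ) :
    MvPowerSeries.coeff d (mono a b c) = if d 0 = a ∧ d 1 = b then c else 0 := by
  unfold mono
  rw [coeff_monomial, if_congr (eq_e_iff d a b) rfl rfl]

lemma coeff_mono_mul (d : Fin 2 →₀ ℕ) (a b : ℕ) (c : ℚ) :
    MvPowerSeries.coeff d (mono a b c * Mgf)
      = if a ≤ d 0 then c * mCoeff (d 0 - a) ((d 1 : ℤ) - b) else 0 := by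
  unfold mono
  rw [coeff_monomial_mul]
  by_cases hab : Finsupp.single (0 : Fin 2) a + Finsupp.single 1 b ≤ d
  · obtain ⟨h0, h1⟩ := (le_e_iff d a b).1 hab
    rw [if_pos hab, if_pos h0, coeff_Mgf]
    have e0 : ((d - (Finsupp.single (0 : Fin 2) a + Finsupp.single 1 b) : Fin 2 →₀ ℕ)) 0
        = d 0 - a := by
      rw [Finsupp.tsub_apply]
      simp [Finsupp.single_apply]
    have e1 : ((d - (Finsupp.single (0 : Fin 2) a + Finsupp.single 1 b) : Fin 2 →₀ ℕ)) 1
        = d 1 - b := by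
      rw [Finsupp.tsub_apply]
      simp [Finsupp.single_apply]
    rw [e0, e1, show ((d 1 - b : ℕ) : ℤ) = (d 1 : ℤ) - b from by push_cast [h1]; ring]
  · rw [if_neg hab]
    rw [le_e_iff] at hab
    by_cases h0 : a ≤ d 0
    · have h1 : ¬ b ≤ d 1 := by tauto
      rw [if_pos h0, mCoeff_neg (by omega), mul_zero]
    · rw [if_neg h0]

open MvPowerSeries in
/-- The generating function `M(x,y) = ∑ m_{λ,k} x^λ y^k` satisfies
`M(x,y) = (y/2)(4 − 3xy − 2xy²)/((1 − xy)(1 − (x/2)(1+y)²))`, stated with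
cleared denominators as an identity of formal power series. -/
theorem genfun_M_identity :
    ((1 - X 0 * X 1) * (1 - (C (1 / 2 : ℚ) : MvPowerSeries (Fin 2) ℚ) * X 0 * (1 + X 1) ^ 2)) *
        Mgf
      = (C (1 / 2 : ℚ) : MvPowerSeries (Fin 2) ℚ) * X 1 * (4 - 3 * X 0 * X 1 - 2 * X 0 * X 1 ^ 2) := by
  rw [hP, hR]
  apply MvPowerSeries.ext
  intro d
  simp only [sub_mul, add_mul]
  simp only [map_sub, map_add, coeff_mono_mul, coeff_mono]
  generalize d 0 = L
  generalize d 1 = K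
  push_cast
  rcases L with _ | _ | l
  · -- L = 0
    norm_num
    rw [mCoeff_zero]
    by_cases hK : K = 1
    · simp [hK]
    · rw [if_neg (by omega : ¬((K : ℤ) = 1)), if_neg hK]
  · -- L = 1
    norm_num
    have h := mCoeff_rec 0 (K : ℤ)
    rw [mCoeff_zero, mCoeff_zero, mCoeff_zero] at h
    push_cast at h
    rw [mCoeff_zero, mCoeff_zero, mCoeff_zero]
    by_cases hK1 : K = 1
    · subst hK1; norm_num at h ⊢; linarith
    by_cases hK2 : K = 2
    · subst hK2; norm_num at h ⊢; linarith
    by_cases hK3 : K = 3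
    · subst hK3; norm_num at h ⊢; linarith
    rw [if_neg (by omega : ¬((K : ℤ) = 1)), if_neg (by omega : ¬((K : ℤ) - 1 = 1)),
      if_neg (by omega : ¬((K : ℤ) - 2 = 1)), if_neg (by omega : ¬((K : ℤ) = 2)),
      if_neg (by omega : ¬((K : ℤ) = 3))] at h
    rw [if_neg (by omega : ¬((K : ℤ) = 1)), if_neg (by omega : ¬((K : ℤ) - 1 = 1)),
      if_neg (by omega : ¬((K : ℤ) - 2 = 1)), if_neg hK2, if_neg hK3]
    linarith
  · -- L ≥ 2
    norm_num
    rw [show l + 1 + 1 - 2 = l from by omega]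
    have h1 := mCoeff_rec (l + 1) (K : ℤ)
    have h2 := mCoeff_rec l ((K : ℤ) - 1)
    rw [show (K : ℤ) - 1 - 1 = (K : ℤ) - 2 from by ring,
      show (K : ℤ) - 1 - 2 = (K : ℤ) - 3 from by ring] at h2
    push_cast at h1 h2
    split_ifs at h1 h2 ⊢ <;> first | linarith | (exfalso; omega)
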